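/- Let x₀ ∈ B₁, let a, b be positive constants, let ℓ(x) = c + m·x be an affine function on ℝⁿ, and let σ : ℝⁿ × ℝ → ℝ be bounded and measurable. Define v(x) := (u(x₀ + a x) − ℓ(x₀ + a x))/b. Then u is a local minimizer of J_σ(·, B_a(x₀)) = ∫ (½‖Dw‖² + σ(x, w)) dx in B_a(x₀) if and only if v is a local minimizer in B₁ of ∫_{B₁} (½‖Dw‖² + σ*(x, w)) dx, where σ*(x, t) := b⁻² a² σ(x₀ + a x, b t + ℓ(x₀ + a x)). -/

import Mathlib

open MeasureTheory Metric Set Filter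

/-- The energy functional with x-dependent potential:
`J_σ(v, W) = ∫_W (½‖Dv(x)‖² + σ(x, v(x))) dx`. -/
noncomputable def Jx (n : ℕ) (σ : EuclideanSpace ℝ (Fin n) → ℝ → ℝ)
    (v : EuclideanSpace ℝ (Fin n) → ℝ) (W : Set (EuclideanSpace ℝ (Fin n))) : ℝ :=
  ∫ x in W, ((1:ℝ)/2) * ‖fderiv ℝ v x‖^2 + σ x (v x)

/-- `u` is a local minimizer of `J_σ` in the open set `W`: `u` is locally Lipschitz and for
every closed ball contained in `W` and every Lipschitz competitor agreeing with `u` outside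
the open ball, the energy of `u` on the ball does not exceed that of the competitor. -/
def IsLocMinX (n : ℕ) (σ : EuclideanSpace ℝ (Fin n) → ℝ → ℝ)
    (u : EuclideanSpace ℝ (Fin n) → ℝ) (W : Set (EuclideanSpace ℝ (Fin n))) : Prop :=
  LocallyLipschitz u ∧
  ∀ (y : EuclideanSpace ℝ (Fin n)) (ρ : ℝ), 0 < ρ → closedBall y ρ ⊆ W →
    ∀ v : EuclideanSpace ℝ (Fin n) → ℝ, (∃ K, LipschitzWith K v) →
      (∀ x, x ∉ ball y ρ → v x = u x) →
      Jx n σ u (ball y ρ) ≤ Jx n σ v (ball y ρ)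

/-!
The passage from `u` to `v` factors into three elementary changes: subtracting the affine
function `ℓ`, precomposing with the dilation `x ↦ x₀ + a • x`, and dividing by `b`. Each of them
is inverted by a change of the same kind, matches Lipschitz competitors agreeing with `u` outside
a ball with those agreeing with the transformed function outside the corresponding ball, and
changes the energy on such a ball by a positive factor plus a term that does not depend on the
competitor: dividing by `b` multiplies it by `b⁻²`, the dilation by `a² a⁻ⁿ`, and subtracting `ℓ`
adds `-∫_B Du · m + ½‖m‖²|B|`. The last term is the same for all competitors because
`∫ Dg · m = 0` for every compactly supported Lipschitz `g` (integration by parts along `m`).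
Hence each step preserves local minimality in both directions.
-/

lemma LipschitzWith.div_const {α : Type*} [PseudoEMetricSpace α] {f : α → ℝ} {K : NNReal}
    (hf : LipschitzWith K f) (b : ℝ) : LipschitzWith (‖b⁻¹‖₊ * K) (fun x => f x / b) := by
  simp only [div_eq_inv_mul]
  exact (lipschitzWith_smul b⁻¹).comp hf

section Lipschitz

variable {α F : Type*} [PseudoMetricSpace α] [ProperSpace α] [NormedAddCommGroup F]

lemma LocallyLipschitz.exists_lipschitzWith_of_hasCompactSupport {g : α → F}
    (hg : LocallyLipschitz g) (hsupp : HasCompactSupport g) : ∃ K, LipschitzWith K g := by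
  set T := cthickening 1 (tsupport g)
  obtain ⟨K, hK⟩ := (hg.locallyLipschitzOn (s := T)).exists_lipschitzOnWith_of_compact
    (hsupp.isCompact.cthickening)
  obtain ⟨C, hC⟩ := hg.continuous.bounded_above_of_compact_support hsupp
  -- a point outside `T` is at distance more than `1` from the support
  have far : ∀ p q, p ∉ T → dist (g p) (g q) ≤ (K + C.toNNReal) * dist p q := by
    intro p q hp
    rw [image_eq_zero_of_notMem_tsupport fun h => hp (self_subset_cthickening _ h), dist_zero_left]
    by_cases hq : q ∈ tsupport g
    · have hpq : 1 < dist p q := not_le.1 fun h => hp (mem_cthickening_of_dist_le p q 1 _ hq h)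
      calc ‖g q‖ ≤ C.toNNReal := (hC q).trans (Real.le_coe_toNNReal C)
        _ ≤ C.toNNReal * dist p q := le_mul_of_one_le_right (by positivity) hpq.le
        _ ≤ (K + C.toNNReal : NNReal) * dist p q := by gcongr; simp
    · rw [image_eq_zero_of_notMem_tsupport hq, norm_zero]
      positivity
  refine ⟨K + C.toNNReal, LipschitzWith.of_dist_le_mul fun p q => ?_⟩
  by_cases hp : p ∈ T
  · by_cases hq : q ∈ T
    · calc dist (g p) (g q) ≤ K * dist p q := hK.dist_le_mul p hp q hq
        _ ≤ (K + C.toNNReal : NNReal) * dist p q := by gcongr; simp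
    · rw [dist_comm, dist_comm p]
      exact far q p hq
  · exact far p q hp

end Lipschitz

section Calculus

variable {E F : Type*} [NormedAddCommGroup E] [NormedSpace ℝ E]
  [NormedAddCommGroup F] [NormedSpace ℝ F]

lemma preimage_affine_ball (x₀ y : E) {a : ℝ} (ha : 0 < a) (r : ℝ) :
    (fun x => x₀ + a • x) ⁻¹' ball (x₀ + a • y) (a * r) = ball y r := by
  ext x
  simp [dist_smul₀, abs_of_pos ha, mul_lt_mul_iff_right₀ ha]

lemma preimage_affine_closedBall (x₀ y : E) {a : ℝ} (ha : 0 < a) (r : ℝ) :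
    (fun x => x₀ + a • x) ⁻¹' closedBall (x₀ + a • y) (a * r) = closedBall y r := by
  ext x
  simp [dist_smul₀, abs_of_pos ha, mul_le_mul_iff_right₀ ha]

lemma affine_inv_affine (x₀ : E) {a : ℝ} (ha : a ≠ 0) (x : E) :
    x₀ + a • (-(a⁻¹ • x₀) + a⁻¹ • x) = x := by
  simp [smul_smul, ha]

lemma lipschitzWith_affine (x₀ : E) (a : ℝ) :
    LipschitzWith ‖a‖₊ (fun x : E => x₀ + a • x) :=
  LipschitzWith.of_dist_le_mul fun p q => by rw [dist_add_left, dist_smul₀]; rfl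

lemma fderiv_comp_affine (f : E → F) (x₀ : E) (a : ℝ) (x : E) :
    fderiv ℝ (fun x => f (x₀ + a • x)) x = a • fderiv ℝ f (x₀ + a • x) := by
  rw [fderiv_comp_smul (f := fun z => f (x₀ + z)), fderiv_comp_add_left]

lemma LocallyLipschitz.exists_norm_fderiv_le [ProperSpace E] {f : E → F}
    (hf : LocallyLipschitz f) {s : Set E} (hs : Bornology.IsBounded s) :
    ∃ C, ∀ x ∈ s, ‖fderiv ℝ f x‖ ≤ C := by
  obtain ⟨R, hR⟩ := hs.subset_ball 0
  obtain ⟨K, hK⟩ := (hf.locallyLipschitzOn (s := closedBall 0 R)).exists_lipschitzOnWith_of_compact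
    (isCompact_closedBall 0 R)
  exact ⟨K, fun x hx => norm_fderiv_le_of_lipschitzOn ℝ
    (mem_of_superset (isOpen_ball.mem_nhds (hR hx)) ball_subset_closedBall) hK⟩

variable [MeasurableSpace E] [BorelSpace E] [FiniteDimensional ℝ E] {μ : Measure E}
  [μ.IsAddHaarMeasure]

lemma LocallyLipschitz.ae_differentiableAt [FiniteDimensional ℝ F] {f : E → F}
    (hf : LocallyLipschitz f) : ∀ᵐ x ∂μ, DifferentiableAt ℝ f x := by
  have h : ∀ R : ℕ, ∀ᵐ x ∂μ, x ∈ ball (0 : E) R → DifferentiableAt ℝ f x := fun R => by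
    obtain ⟨K, hK⟩ := (hf.locallyLipschitzOn (s := closedBall 0 R)).exists_lipschitzOnWith_of_compact
      (isCompact_closedBall 0 R)
    filter_upwards [(hK.mono ball_subset_closedBall).ae_differentiableWithinAt_of_mem] with x hx hxR
    exact (hx hxR).differentiableAt (isOpen_ball.mem_nhds hxR)
  filter_upwards [ae_all_iff.2 h] with x hx
  obtain ⟨R, hR⟩ := exists_nat_gt ‖x‖
  exact hx R (mem_ball_zero_iff.2 hR)

lemma integral_comp_affine (f : E → F) (x₀ : E) (a : ℝ) :
    ∫ x, f (x₀ + a • x) ∂μ = |(a ^ Module.finrank ℝ E)⁻¹| • ∫ z, f z ∂μ := by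
  rw [Measure.integral_comp_smul μ (fun z => f (x₀ + z)), integral_add_left_eq_self]

lemma setIntegral_preimage_affine (f : E → F) (x₀ : E) (a : ℝ) {s : Set E}
    (hs : MeasurableSet s) :
    ∫ x in (fun x => x₀ + a • x) ⁻¹' s, f (x₀ + a • x) ∂μ
      = |(a ^ Module.finrank ℝ E)⁻¹| • ∫ z in s, f z ∂μ := by
  have hT : Measurable fun x : E => x₀ + a • x := by fun_prop
  rw [← integral_indicator hs, ← integral_indicator (hT hs), ← integral_comp_affine]
  rfl

lemma LipschitzWith.integral_fderiv_apply_eq_zero {g : E → ℝ} {K : NNReal}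
    (hg : LipschitzWith K g) (hsupp : HasCompactSupport g) (v : E) :
    ∫ x, fderiv ℝ g x v ∂μ = 0 := by
  have h := integral_lineDeriv_mul_eq (μ := μ) (LipschitzWith.const (1 : ℝ)) hg hsupp (-v)
  simp only [lineDeriv, deriv_const, zero_mul, integral_zero, neg_neg, mul_one] at h
  rw [h]
  refine integral_congr_ae ?_
  filter_upwards [hg.ae_differentiableAt] with x hx
  exact hx.lineDeriv_eq_fderiv.symm

lemma LocallyLipschitz.integrableOn_fderiv_apply {f : E → ℝ} (hf : LocallyLipschitz f)
    {s : Set E} (hs : MeasurableSet s) (hsb : Bornology.IsBounded s) (w : E) :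
    IntegrableOn (fun x => fderiv ℝ f x w) s μ := by
  obtain ⟨C, hC⟩ := hf.exists_norm_fderiv_le hsb
  refine IntegrableOn.of_bound hsb.measure_lt_top
    (measurable_fderiv_apply_const ℝ f w).aestronglyMeasurable (C * ‖w‖) ?_
  filter_upwards [ae_restrict_mem hs] with x hx
  exact (fderiv ℝ f x).le_of_opNorm_le (hC x hx) w

lemma setIntegral_ball_fderiv_apply_eq {u v : E → ℝ} (hu : LocallyLipschitz u)
    (hv : LocallyLipschitz v) {y : E} {r : ℝ} (hr : r ≠ 0) (hvu : ∀ x ∉ ball y r, v x = u x)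
    (w : E) : ∫ x in ball y r, fderiv ℝ v x w ∂μ = ∫ x in ball y r, fderiv ℝ u x w ∂μ := by
  set g := fun x => v x - u x
  have hg_out : ∀ x ∉ closedBall y r, g x = 0 := fun x hx =>
    sub_eq_zero.2 (hvu x fun h => hx (ball_subset_closedBall h))
  have htsupp : tsupport g ⊆ closedBall y r :=
    closure_minimal (Function.support_subset_iff'.2 hg_out) isClosed_closedBall
  have hsupp : HasCompactSupport g := HasCompactSupport.intro (isCompact_closedBall y r) hg_out
  obtain ⟨K, hK⟩ := (hv.sub hu).exists_lipschitzWith_of_hasCompactSupport hsupp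
  -- the boundary sphere is null, so the integral of `Dg w` over the ball is its integral over `E`
  have hball : ∫ x in ball y r, fderiv ℝ g x w ∂μ = ∫ x, fderiv ℝ g x w ∂μ := by
    have hae : (ball y r : Set E) =ᵐ[μ] closedBall y r := by
      refine ae_eq_set.2 ⟨by simp [sdiff_eq_empty.2 ball_subset_closedBall], ?_⟩
      rw [closedBall_sdiff_ball]
      exact Measure.addHaar_sphere_of_ne_zero μ y hr
    rw [setIntegral_congr_set hae]
    refine setIntegral_eq_integral_of_forall_compl_eq_zero fun x hx => ?_
    rw [fderiv_of_notMem_tsupport ℝ (fun h => hx (htsupp h))]; rfl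
  have hDg : ∀ᵐ x ∂μ, fderiv ℝ g x w = fderiv ℝ v x w - fderiv ℝ u x w := by
    filter_upwards [hu.ae_differentiableAt, hv.ae_differentiableAt] with x hux hvx
    rw [fderiv_fun_sub hvx hux]; rfl
  rw [← sub_eq_zero, ← integral_sub (hv.integrableOn_fderiv_apply measurableSet_ball
    isBounded_ball w) (hu.integrableOn_fderiv_apply measurableSet_ball isBounded_ball w),
    ← integral_congr_ae (ae_restrict_of_ae hDg), hball, hK.integral_fderiv_apply_eq_zero hsupp]

end Calculus

lemma norm_sub_innerSL_sq {E : Type*} [NormedAddCommGroup E] [InnerProductSpace ℝ E]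
    [CompleteSpace E] (L : E →L[ℝ] ℝ) (m : E) :
    ‖L - innerSL ℝ m‖ ^ 2 = ‖L‖ ^ 2 - 2 * L m + ‖m‖ ^ 2 := by
  obtain ⟨v, rfl⟩ := (InnerProductSpace.toDual ℝ E).surjective L
  rw [show innerSL ℝ m = InnerProductSpace.toDual ℝ E m from rfl, ← map_sub,
    LinearIsometryEquiv.norm_map, LinearIsometryEquiv.norm_map,
    InnerProductSpace.toDual_apply_apply, norm_sub_sq_real]

section Energy

variable {n : ℕ}
local notation "ℝⁿ" => EuclideanSpace ℝ (Fin n)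

lemma Jx_div_const (σ : ℝⁿ → ℝ → ℝ) (v : ℝⁿ → ℝ) (S : Set ℝⁿ) {b : ℝ} (hb : b ≠ 0) :
    Jx n (fun x t => b⁻¹ ^ 2 * σ x (b * t)) (fun x => v x / b) S = b⁻¹ ^ 2 * Jx n σ v S := by
  have hD : fderiv ℝ (fun x => v x / b) = b⁻¹ • fderiv ℝ v := by
    simp_rw [div_eq_inv_mul]
    exact fderiv_const_smul_field (f := v) b⁻¹
  rw [Jx, Jx, ← integral_const_mul, hD]
  congr 1 with x
  rw [Pi.smul_apply, norm_smul, mul_div_cancel₀ _ hb, Real.norm_eq_abs, mul_pow, sq_abs]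
  ring

lemma Jx_comp_affine (σ : ℝⁿ → ℝ → ℝ) (u : ℝⁿ → ℝ) (x₀ : ℝⁿ) {a : ℝ} (ha : 0 < a)
    {S : Set ℝⁿ} (hS : MeasurableSet S) :
    Jx n (fun x t => a ^ 2 * σ (x₀ + a • x) t) (fun x => u (x₀ + a • x))
        ((fun x => x₀ + a • x) ⁻¹' S) = a ^ 2 * (a ^ n)⁻¹ * Jx n σ u S := by
  have h := setIntegral_preimage_affine (μ := volume)
    (fun z => (1 : ℝ) / 2 * ‖fderiv ℝ u z‖ ^ 2 + σ z (u z)) x₀ a hS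
  rw [finrank_euclideanSpace_fin, abs_of_pos (by positivity), smul_eq_mul] at h
  rw [Jx, Jx, mul_assoc, ← h, ← integral_const_mul]
  congr 1 with x
  rw [fderiv_comp_affine, norm_smul, Real.norm_eq_abs, mul_pow, sq_abs]
  ring

lemma integrableOn_energy_density {σ : ℝⁿ → ℝ → ℝ} (hσmeas : Measurable (Function.uncurry σ))
    (hσbdd : ∃ M, ∀ x t, |σ x t| ≤ M) {u : ℝⁿ → ℝ} (hu : LocallyLipschitz u) {S : Set ℝⁿ}
    (hS : MeasurableSet S) (hSb : Bornology.IsBounded S) :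
    IntegrableOn (fun x => (1 : ℝ) / 2 * ‖fderiv ℝ u x‖ ^ 2 + σ x (u x)) S := by
  obtain ⟨C, hC⟩ := hu.exists_norm_fderiv_le hSb
  obtain ⟨M, hM⟩ := hσbdd
  refine IntegrableOn.of_bound hSb.measure_lt_top ?_ (1 / 2 * C ^ 2 + M) ?_
  · exact ((((measurable_fderiv ℝ u).norm.pow_const 2).const_mul _).add
      (hσmeas.comp (measurable_id.prodMk hu.continuous.measurable))).aestronglyMeasurable
  · filter_upwards [ae_restrict_mem hS] with x hx
    rw [Real.norm_eq_abs]
    refine (abs_add_le _ _).trans (add_le_add ?_ (hM _ _))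
    rw [abs_of_nonneg (by positivity)]
    gcongr
    exact hC x hx

lemma Jx_sub_affine {σ : ℝⁿ → ℝ → ℝ} (hσmeas : Measurable (Function.uncurry σ))
    (hσbdd : ∃ M, ∀ x t, |σ x t| ≤ M) (c : ℝ) (m : ℝⁿ) {u : ℝⁿ → ℝ} (hu : LocallyLipschitz u)
    {S : Set ℝⁿ} (hS : MeasurableSet S) (hSb : Bornology.IsBounded S) :
    Jx n (fun x t => σ x (t + (c + inner ℝ m x))) (fun x => u x - (c + inner ℝ m x)) S
      = Jx n σ u S - (∫ x in S, fderiv ℝ u x m) + 1 / 2 * ‖m‖ ^ 2 * volume.real S := by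
  have hD : ∀ᵐ x : ℝⁿ, fderiv ℝ (fun x => u x - (c + inner ℝ m x)) x
      = fderiv ℝ u x - innerSL ℝ m := by
    filter_upwards [hu.ae_differentiableAt] with x hx
    exact (hx.hasFDerivAt.sub ((innerSL ℝ m).hasFDerivAt.const_add c)).fderiv
  have hdensity : ∀ᵐ x : ℝⁿ, (1 : ℝ) / 2 * ‖fderiv ℝ (fun x => u x - (c + inner ℝ m x)) x‖ ^ 2
        + σ x (u x - (c + inner ℝ m x) + (c + inner ℝ m x))
      = ((1 : ℝ) / 2 * ‖fderiv ℝ u x‖ ^ 2 + σ x (u x) - fderiv ℝ u x m) + 1 / 2 * ‖m‖ ^ 2 := by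
    filter_upwards [hD] with x hx
    rw [hx, norm_sub_innerSL_sq, sub_add_cancel]
    ring
  have hE := integrableOn_energy_density hσmeas hσbdd hu hS hSb
  have hDm := hu.integrableOn_fderiv_apply (μ := volume) hS hSb m
  have hc : IntegrableOn (fun _ => (1 : ℝ) / 2 * ‖m‖ ^ 2) S :=
    integrableOn_const hSb.measure_lt_top.ne
  rw [Jx, Jx, integral_congr_ae (ae_restrict_of_ae hdensity),
    integral_add ?_ hc, integral_sub hE hDm,
    setIntegral_const, smul_eq_mul, mul_comm (volume.real S)]
  exact hE.sub hDm

lemma isLocMinX_sub_affine_iff {σ : ℝⁿ → ℝ → ℝ} (hσmeas : Measurable (Function.uncurry σ))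
    (hσbdd : ∃ M, ∀ x t, |σ x t| ≤ M) (c : ℝ) (m : ℝⁿ) {u : ℝⁿ → ℝ} {W : Set ℝⁿ} :
    IsLocMinX n σ u W ↔ IsLocMinX n (fun x t => σ x (t + (c + inner ℝ m x)))
      (fun x => u x - (c + inner ℝ m x)) W := by
  set ℓ : ℝⁿ → ℝ := fun x => c + inner ℝ m x
  have hℓ : LipschitzWith _ ℓ := (LipschitzWith.const c).add (innerSL ℝ m).lipschitz
  -- the cross term `∫ Dv · m` only depends on the boundary values of `v`
  have energy_gap : ∀ {v : ℝⁿ → ℝ}, LocallyLipschitz u → LocallyLipschitz v → ∀ y ρ, 0 < ρ →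
      (∀ x ∉ ball y ρ, v x = u x) →
      Jx n (fun x t => σ x (t + ℓ x)) (fun x => v x - ℓ x) (ball y ρ)
          - Jx n (fun x t => σ x (t + ℓ x)) (fun x => u x - ℓ x) (ball y ρ)
        = Jx n σ v (ball y ρ) - Jx n σ u (ball y ρ) := by
    intro v hu hv y ρ hρ hvu
    rw [Jx_sub_affine hσmeas hσbdd c m hv measurableSet_ball isBounded_ball,
      Jx_sub_affine hσmeas hσbdd c m hu measurableSet_ball isBounded_ball,
      setIntegral_ball_fderiv_apply_eq hu hv hρ.ne' hvu]
    ring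
  constructor
  · rintro ⟨hu, hmin⟩
    refine ⟨hu.sub hℓ.locallyLipschitz, fun y ρ hρ hsub w ⟨K, hw⟩ hwu => ?_⟩
    have hvu : ∀ x ∉ ball y ρ, w x + ℓ x = u x := fun x hx => by rw [hwu x hx, sub_add_cancel]
    have hgap := energy_gap hu (hw.add hℓ).locallyLipschitz y ρ hρ hvu
    simp only [add_sub_cancel_right] at hgap
    linarith [hmin y ρ hρ hsub _ ⟨_, hw.add hℓ⟩ hvu]
  · rintro ⟨hu', hmin⟩
    have hu : LocallyLipschitz u := by
      rw [show u = fun x => u x - ℓ x + ℓ x from funext fun x => (sub_add_cancel _ _).symm]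
      exact hu'.add hℓ.locallyLipschitz
    refine ⟨hu, fun y ρ hρ hsub v ⟨K, hv⟩ hvu => ?_⟩
    have := hmin y ρ hρ hsub _ ⟨_, hv.sub hℓ⟩ fun x hx => by rw [hvu x hx]
    linarith [energy_gap hu hv.locallyLipschitz y ρ hρ hvu]

lemma isLocMinX_div_const_iff {σ : ℝⁿ → ℝ → ℝ} {u : ℝⁿ → ℝ} {W : Set ℝⁿ} {b : ℝ} (hb : 0 < b) :
    IsLocMinX n σ u W ↔ IsLocMinX n (fun x t => b⁻¹ ^ 2 * σ x (b * t)) (fun x => u x / b) W := by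
  constructor
  · rintro ⟨hu, hmin⟩
    refine ⟨(LipschitzWith.id.div_const b).locallyLipschitz.comp hu,
      fun y ρ hρ hsub w ⟨K, hw⟩ hwu => ?_⟩
    have hbw : (fun x => b * w x / b) = w := funext fun x => mul_div_cancel_left₀ _ hb.ne'
    have := hmin y ρ hρ hsub (fun x => b * w x) ⟨_, (lipschitzWith_smul b).comp hw⟩ fun x hx => by
      simp [hwu x hx, mul_div_cancel₀ _ hb.ne']
    rw [← hbw, Jx_div_const _ _ _ hb.ne', Jx_div_const _ _ _ hb.ne']
    gcongr
  · rintro ⟨hu, hmin⟩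
    refine ⟨?_, fun y ρ hρ hsub v ⟨K, hv⟩ hvu => ?_⟩
    · rw [show u = fun x => b * (u x / b) from funext fun x => (mul_div_cancel₀ _ hb.ne').symm]
      exact (lipschitzWith_smul b).locallyLipschitz.comp hu
    have := hmin y ρ hρ hsub _ ⟨_, hv.div_const b⟩ fun x hx => by rw [hvu x hx]
    rw [Jx_div_const _ _ _ hb.ne', Jx_div_const _ _ _ hb.ne'] at this
    exact le_of_mul_le_mul_left this (by positivity)

lemma IsLocMinX.comp_affine {σ : ℝⁿ → ℝ → ℝ} {u : ℝⁿ → ℝ} {W : Set ℝⁿ}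
    (h : IsLocMinX n σ u W) (x₀ : ℝⁿ) {a : ℝ} (ha : 0 < a) :
    IsLocMinX n (fun x t => a ^ 2 * σ (x₀ + a • x) t) (fun x => u (x₀ + a • x))
      ((fun x => x₀ + a • x) ⁻¹' W) := by
  refine ⟨h.1.comp (lipschitzWith_affine x₀ a).locallyLipschitz,
    fun y ρ hρ hsub w ⟨K, hw⟩ hwu => ?_⟩
  set v : ℝⁿ → ℝ := fun z => w (-(a⁻¹ • x₀) + a⁻¹ • z)
  have hvw : (fun x => v (x₀ + a • x)) = w := by
    funext x
    simp only [v, smul_add, smul_smul, inv_mul_cancel₀ ha.ne', one_smul, neg_add_cancel_left]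
  have hsub' : closedBall (x₀ + a • y) (a * ρ) ⊆ W := fun z hz => by
    rw [← affine_inv_affine x₀ ha.ne' z]
    exact hsub (by rw [← preimage_affine_closedBall x₀ y ha, mem_preimage,
      affine_inv_affine x₀ ha.ne']; exact hz)
  have hvu : ∀ z ∉ ball (x₀ + a • y) (a * ρ), v z = u z := fun z hz => by
    simpa only [affine_inv_affine x₀ ha.ne'] using hwu (-(a⁻¹ • x₀) + a⁻¹ • z) (by
      rw [← preimage_affine_ball x₀ y ha, mem_preimage, affine_inv_affine x₀ ha.ne']; exact hz)
  have := h.2 _ _ (by positivity) hsub' v ⟨_, hw.comp (lipschitzWith_affine _ _)⟩ hvu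
  rw [← preimage_affine_ball x₀ y ha, ← hvw, Jx_comp_affine _ _ _ ha measurableSet_ball,
    Jx_comp_affine _ _ _ ha measurableSet_ball]
  gcongr

lemma isLocMinX_comp_affine_iff {σ : ℝⁿ → ℝ → ℝ} {u : ℝⁿ → ℝ} {W : Set ℝⁿ} (x₀ : ℝⁿ) {a : ℝ}
    (ha : 0 < a) :
    IsLocMinX n σ u W ↔ IsLocMinX n (fun x t => a ^ 2 * σ (x₀ + a • x) t)
      (fun x => u (x₀ + a • x)) ((fun x => x₀ + a • x) ⁻¹' W) := by
  refine ⟨fun h => h.comp_affine x₀ ha, fun h => ?_⟩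
  have := h.comp_affine (-(a⁻¹ • x₀)) (inv_pos.2 ha)
  simpa [affine_inv_affine x₀ ha.ne', preimage_preimage, ha.ne'] using this

end Energy

theorem affine_rescaled_minimizer_general (n : ℕ)
    (σ : EuclideanSpace ℝ (Fin n) → ℝ → ℝ)
    (hσmeas : Measurable (Function.uncurry σ))
    (hσbdd : ∃ M, ∀ x t, |σ x t| ≤ M)
    (x₀ : EuclideanSpace ℝ (Fin n))
    (a b : ℝ) (ha : 0 < a) (hb : 0 < b)
    (c : ℝ) (m : EuclideanSpace ℝ (Fin n))
    (u : EuclideanSpace ℝ (Fin n) → ℝ) :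
    IsLocMinX n σ u (ball x₀ a) ↔
      IsLocMinX n
        (fun x t => b⁻¹^2 * a^2 * σ (x₀ + a • x) (b * t + (c + inner ℝ m (x₀ + a • x))))
        (fun x => (u (x₀ + a • x) - (c + inner ℝ m (x₀ + a • x))) / b)
        (ball (0 : EuclideanSpace ℝ (Fin n)) 1) := by
  have hball : (fun x => x₀ + a • x) ⁻¹' ball x₀ a = ball 0 1 := by
    simpa using preimage_affine_ball x₀ 0 ha 1
  rw [isLocMinX_sub_affine_iff hσmeas hσbdd c m, isLocMinX_comp_affine_iff x₀ ha, hball,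
    isLocMinX_div_const_iff hb]
  simp only [mul_assoc]

/-- With `ℓ(x) = c + m·x` affine, `u` is a local minimizer of `J_σ` in
`B_a(x₀)` if and only if `v(x) = (u(x₀+ax) − ℓ(x₀+ax))/b` is a local minimizer in `B₁` of
the functional with potential `σ*(x,t) = b⁻² a² σ(x₀ + a x, b t + ℓ(x₀ + a x))`. -/
theorem affine_rescaled_minimizer (n : ℕ) (hn : 2 ≤ n)
    (σ : EuclideanSpace ℝ (Fin n) → ℝ → ℝ)
    (hσmeas : Measurable (Function.uncurry σ))
    (hσbdd : ∃ M, ∀ x t, |σ x t| ≤ M)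
    (x₀ : EuclideanSpace ℝ (Fin n)) (hx₀ : x₀ ∈ ball (0 : EuclideanSpace ℝ (Fin n)) 1)
    (a b : ℝ) (ha : 0 < a) (hb : 0 < b)
    (c : ℝ) (m : EuclideanSpace ℝ (Fin n))
    (u : EuclideanSpace ℝ (Fin n) → ℝ) :
    IsLocMinX n σ u (ball x₀ a) ↔
      IsLocMinX n
        (fun x t => b⁻¹^2 * a^2 * σ (x₀ + a • x) (b * t + (c + inner ℝ m (x₀ + a • x))))
        (fun x => (u (x₀ + a • x) - (c + inner ℝ m (x₀ + a • x))) / b)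
        (ball (0 : EuclideanSpace ℝ (Fin n)) 1) :=
  affine_rescaled_minimizer_general n σ hσmeas hσbdd x₀ a b ha hb c m u
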